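/- Assume the setting described in the context, with α ∈ (1,2), m ≥ 2, 0 < ε < (α−1)/(m−1) and η ∈ (0,1). Then there exists a constant C > 0 depending only on N, α, m, ε, η, κ₁ such that Q^{out}_G((u−φ₊)_+, −(u−φ₊)_−) ≤ C C_{φ₊} |{x ∈ ℝ^N : u(x) > φ₊(x)}|. -/

import Mathlib

noncomputable section
open MeasureTheory Metric Set

/-- `ℝ^N`. -/
abbrev Rn (N : ℕ) : Type := EuclideanSpace ℝ (Fin N)

/-- `Ψ_ε(x) = (|x|^ε − 2)_+`. -/
noncomputable def Psi (N : ℕ) (ε : ℝ) (x : Rn N) : ℝ := max (‖x‖ ^ ε - 2) 0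

/-- `D_G(a,b) = (G(a)−G(b))/(a−b)` for `a ≠ b`, `D_G(a,a) = G′(a)`, with `G(z) = z^{m−1}`. -/
noncomputable def DG (m a b : ℝ) : ℝ :=
  if a = b then (m - 1) * a ^ (m - 2) else (a ^ (m - 1) - b ^ (m - 1)) / (a - b)

/-- `B_G(v,w) = κ₀ ∬ (v(y)−v(x))(w(y)−w(x)) D_G(u(x),u(y)) |y−x|^{−(N+α)} dx dy`. -/
noncomputable def BG (N : ℕ) (α m κ₀ : ℝ) (u v w : Rn N → ℝ) : ℝ :=
  κ₀ * ∫ q : Rn N × Rn N,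
    (v q.2 - v q.1) * (w q.2 - w q.1) * DG m (u q.1) (u q.2)
      * ‖q.2 - q.1‖ ^ (-((N : ℝ) + α))

/-- `Q_G(v,w)` restricted to a region `S ⊆ ℝ^N × ℝ^N`:
`κ₁ ∬_S v(x)(w(y)−w(x)) D_G(u(x),u(y)) ((∇φ(x)/φ(x))·(y−x)) |y−x|^{−(N+α)} dx dy`,
where the factor `∇φ(x)/φ(x)` is interpreted as `0` where `φ(x) = 0`
(junk-value inversion). -/
noncomputable def QG (N : ℕ) (α m κ₁ : ℝ) (u φ : Rn N → ℝ)
    (S : Set (Rn N × Rn N)) (v w : Rn N → ℝ) : ℝ :=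
  κ₁ * ∫ q in S,
    v q.1 * (w q.2 - w q.1) * DG m (u q.1) (u q.2)
      * (inner ℝ ((φ q.1)⁻¹ • gradient φ q.1) (q.2 - q.1) : ℝ)
      * ‖q.2 - q.1‖ ^ (-((N : ℝ) + α))

open scoped NNReal ENNReal

lemma real_rpow_add_le {a b p : ℝ} (ha : 0 ≤ a) (hb : 0 ≤ b) (hp : 0 ≤ p) (hp1 : p ≤ 1) :
    (a + b) ^ p ≤ a ^ p + b ^ p := by
  have h := NNReal.rpow_add_le_add_rpow a.toNNReal b.toNNReal hp hp1
  have hab : a.toNNReal + b.toNNReal = (a + b).toNNReal := by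
    rw [← Real.toNNReal_add ha hb]
  rw [hab] at h
  have := (NNReal.coe_le_coe).2 h
  simpa [NNReal.coe_rpow, Real.coe_toNNReal _ (by positivity : (0:ℝ) ≤ a + b),
    Real.coe_toNNReal _ ha, Real.coe_toNNReal _ hb] using this

lemma DG_abs_le {m a b M : ℝ} (hm : 2 ≤ m) (ha : 0 ≤ a) (hb : 0 ≤ b)
    (haM : a ≤ M) (hbM : b ≤ M) : |DG m a b| ≤ (m - 1) * M ^ (m - 2) := by
  have hM : 0 ≤ M := le_trans ha haM
  have hm1 : (0:ℝ) ≤ m - 1 := by linarith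
  have hMpow : (0:ℝ) ≤ M ^ (m - 2) := Real.rpow_nonneg hM _
  by_cases hab : a = b
  · rw [DG, if_pos hab, abs_mul, abs_of_nonneg hm1,
      abs_of_nonneg (Real.rpow_nonneg ha _)]
    exact mul_le_mul_of_nonneg_left (Real.rpow_le_rpow ha haM (by linarith)) hm1
  · rw [DG, if_neg hab, abs_div]
    rw [div_le_iff₀ (abs_pos.2 (sub_ne_zero.2 hab))]
    have key : ‖(fun t : ℝ => t ^ (m - 1)) a - (fun t : ℝ => t ^ (m - 1)) b‖
        ≤ ((m - 1) * M ^ (m - 2)) * ‖a - b‖ := by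
      apply Convex.norm_image_sub_le_of_norm_hasDerivWithin_le
        (f' := fun t : ℝ => (m - 1) * t ^ (m - 2)) (s := Icc (0:ℝ) M)
        ?_ ?_ (convex_Icc _ _) ⟨hb, hbM⟩ ⟨ha, haM⟩
      · intro t ht
        have h := Real.hasDerivAt_rpow_const (x := t) (p := m - 1) (Or.inr (by linarith))
        have : m - 1 - 1 = m - 2 := by ring
        rw [this] at h
        exact h.hasDerivWithinAt
      · intro t ht
        rw [Real.norm_eq_abs, abs_mul, abs_of_nonneg hm1,
          abs_of_nonneg (Real.rpow_nonneg ht.1 _)]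
        exact mul_le_mul_of_nonneg_left (Real.rpow_le_rpow ht.1 ht.2 (by linarith)) hm1
    simpa [Real.norm_eq_abs, abs_sub_comm] using key

set_option maxHeartbeats 2000000 in
/-- Lemma 3.9 of the paper: for `α ∈ (1,2)`, `0 < ε < (α−1)/(m−1)` and `η ∈ (0,1)`,
`Q^{out}_G((u−φ₊)_+, −(u−φ₊)_−) ≤ C C_{φ₊} |{u > φ₊}|`. -/
theorem Qout_plus_minus (N : ℕ) (hN : 1 ≤ N) (α m ε η κ₁ : ℝ)
    (hα : α ∈ Ioo (1 : ℝ) 2) (hm : 2 ≤ m) (hε : 0 < ε)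
    (hεα : ε < (α - 1) / (m - 1)) (hη : η ∈ Ioo (0 : ℝ) 1) (hκ₁ : 0 < κ₁) :
    ∃ C : ℝ, 0 < C ∧
      ∀ u : Rn N → ℝ, Measurable u →
        (∀ x : Rn N, 0 ≤ u x ∧ u x ≤ 1 + Psi N ε x) →
      ∀ (φ : Rn N → ℝ) (Cφ : ℝ), ContDiff ℝ (⊤ : ℕ∞) φ →
        (∀ x : Rn N, 1/4 < φ x ∧ φ x ≤ 1 + Psi N ε x) →
        (∀ x : Rn N, (2 : ℝ) ^ (1/ε) ≤ ‖x‖ → φ x = 1 + Psi N ε x) →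
        (∀ x : Rn N, ‖gradient φ x‖ / φ x + ‖gradient φ x‖
            + (‖gradient φ x‖ / φ x) ^ 2 + ‖gradient φ x‖ ^ 2 ≤ Cφ) →
        QG N α m κ₁ u φ {q : Rn N × Rn N | η ≤ dist q.1 q.2}
            (fun x => max (u x - φ x) 0) (fun x => -(max (φ x - u x) 0))
          ≤ C * Cφ * (volume {x : Rn N | φ x < u x}).toReal := by
  obtain ⟨hα1, hα2⟩ := hα
  obtain ⟨hη0, hη1⟩ := hη
  set R : ℝ := 2 ^ (1/ε) with hRdef
  set β : ℝ := ε * (m - 1) with hβdef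
  have hm1 : (1:ℝ) ≤ m - 1 := by linarith
  have hβ0 : 0 < β := mul_pos hε (by linarith)
  have hβα : β < α - 1 := by
    have h1 : ε * (m-1) < ((α-1)/(m-1)) * (m-1) :=
      mul_lt_mul_of_pos_right hεα (by linarith)
    have h2 : ((α-1)/(m-1)) * (m-1) = α - 1 := by
      field_simp
    rw [hβdef]; linarith
  have hβ1 : β ≤ 1 := by linarith
  have hR0 : (0:ℝ) < R := Real.rpow_pos_of_pos two_pos _
  have hRβ : (0:ℝ) ≤ R ^ β := Real.rpow_nonneg hR0.le _
  have hs : (0:ℝ) < (N:ℝ) + α - 1 := by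
    have : (1:ℝ) ≤ (N:ℝ) := by exact_mod_cast hN
    linarith
  -- the radial bound function
  set Hr : Rn N → ℝ := fun z =>
    if η ≤ ‖z‖ then (1 + R ^ β + ‖z‖ ^ β) * ‖z‖ ^ (1 - ((N:ℝ) + α)) else 0 with hHrdef
  have hHr_nonneg : ∀ z, 0 ≤ Hr z := by
    intro z; rw [hHrdef]; dsimp only
    split
    · have h1 : (0:ℝ) ≤ ‖z‖ ^ β := Real.rpow_nonneg (norm_nonneg _) _
      have h2 : (0:ℝ) ≤ ‖z‖ ^ (1 - ((N:ℝ) + α)) := Real.rpow_nonneg (norm_nonneg _) _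
      positivity
    · exact le_refl 0
  have hHr_meas : Measurable Hr := by
    rw [hHrdef]
    apply Measurable.ite (measurableSet_le measurable_const measurable_norm)
    · fun_prop
    · exact measurable_const
  set s : ℝ := (N:ℝ) + α - 1 with hsdef
  set r : ℝ := s - β with hrdef
  have hrN : (Module.finrank ℝ (Rn N) : ℝ) < r := by
    rw [finrank_euclideanSpace_fin, hrdef, hsdef]
    linarith
  set K0 : ℝ := 2 * (1 + R ^ β) * (1 + 1/η) ^ s with hK0def
  have hK00 : 0 ≤ K0 := by positivity
  have hHr_le : ∀ z : Rn N, Hr z ≤ K0 * (1 + ‖z‖) ^ (-r) := by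
    intro z
    rw [hHrdef]; dsimp only
    split
    case isFalse =>
      have : (0:ℝ) ≤ (1 + ‖z‖) ^ (-r) := Real.rpow_nonneg (by positivity) _
      positivity
    case isTrue hz =>
      have hz0 : (0:ℝ) < ‖z‖ := lt_of_lt_of_le hη0 hz
      have hP1 : (1:ℝ) ≤ (1 + ‖z‖) ^ β := by
        calc (1:ℝ) = (1 + ‖z‖) ^ (0:ℝ) := (Real.rpow_zero _).symm
        _ ≤ (1 + ‖z‖) ^ β :=
          Real.rpow_le_rpow_of_exponent_le (by linarith [norm_nonneg z]) hβ0.le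
      have hzβ : ‖z‖ ^ β ≤ (1 + ‖z‖) ^ β :=
        Real.rpow_le_rpow (norm_nonneg z) (by linarith) hβ0.le
      have c1 : 1 + R ^ β + ‖z‖ ^ β ≤ 2 * (1 + R ^ β) * (1 + ‖z‖) ^ β := by
        nlinarith [hP1, hzβ, hRβ]
      have hinv : (1 + ‖z‖) * (1 + 1/η)⁻¹ ≤ ‖z‖ := by
        rw [mul_inv_le_iff₀ (by positivity : (0:ℝ) < 1 + 1/η)]
        have h1 : (1:ℝ) ≤ ‖z‖ / η := (one_le_div hη0).2 hz
        have h2 : ‖z‖ * (1 + 1/η) = ‖z‖ + ‖z‖/η := by ring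
        linarith
      have c2 : ‖z‖ ^ (1 - ((N:ℝ) + α)) ≤ (1 + 1/η) ^ s * (1 + ‖z‖) ^ (-s) := by
        have he : 1 - ((N:ℝ) + α) = -s := by rw [hsdef]; ring
        rw [he]
        have hpos : (0:ℝ) < (1 + ‖z‖) * (1 + 1/η)⁻¹ := by positivity
        calc ‖z‖ ^ (-s) ≤ ((1 + ‖z‖) * (1 + 1/η)⁻¹) ^ (-s) :=
              Real.rpow_le_rpow_of_nonpos hpos hinv (by linarith)
        _ = (1 + ‖z‖) ^ (-s) * ((1 + 1/η)⁻¹) ^ (-s) :=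
              Real.mul_rpow (by positivity) (by positivity)
        _ = (1 + 1/η) ^ s * (1 + ‖z‖) ^ (-s) := by
              rw [Real.inv_rpow (by positivity), ← Real.rpow_neg (by positivity), neg_neg]
              ring
      calc (1 + R ^ β + ‖z‖ ^ β) * ‖z‖ ^ (1 - ((N:ℝ) + α))
          ≤ (2 * (1 + R ^ β) * (1 + ‖z‖) ^ β) * ((1 + 1/η) ^ s * (1 + ‖z‖) ^ (-s)) := by
            apply mul_le_mul c1 c2 (Real.rpow_nonneg (norm_nonneg z) _) (by positivity)
      _ = K0 * ((1 + ‖z‖) ^ β * (1 + ‖z‖) ^ (-s)) := by rw [hK0def]; ring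
      _ = K0 * (1 + ‖z‖) ^ (-r) := by
            rw [← Real.rpow_add (by positivity : (0:ℝ) < 1 + ‖z‖)]
            congr 1
            rw [hrdef]; ring
  have hint : Integrable Hr (volume : Measure (Rn N)) := by
    apply ((integrable_one_add_norm (E := Rn N) (μ := volume) hrN).const_mul K0).mono'
      hHr_meas.aestronglyMeasurable
    exact ae_of_all _ fun z => by
      rw [Real.norm_eq_abs, abs_of_nonneg (hHr_nonneg z)]; exact hHr_le z
  set J : ℝ≥0∞ := ∫⁻ z : Rn N, ENNReal.ofReal (Hr z) with hJdef
  have hJ : J < ⊤ := by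
    have h1 : J ≤ ∫⁻ z : Rn N, ‖Hr z‖ₑ := lintegral_mono fun z => Real.ofReal_le_enorm _
    exact lt_of_le_of_lt h1 hint.2
  set c : ℝ := (m - 1) * 2 ^ (m - 1) with hcdef
  have hc0 : (0:ℝ) < c := mul_pos (by linarith) (Real.rpow_pos_of_pos two_pos _)
  refine ⟨κ₁ * (c * (J.toReal + 1)), ?_, ?_⟩
  · apply mul_pos hκ₁
    apply mul_pos hc0
    have := ENNReal.toReal_nonneg (a := J)
    linarith
  intro u hu hu01 φ Cφ hφC hφb hφout hφgrad
  have hφcont : Continuous φ := hφC.continuous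
  have hCφ0 : 0 ≤ Cφ := by
    have h := hφgrad 0
    have h1 : (0:ℝ) < φ 0 := by linarith [(hφb 0).1]
    have h2 : (0:ℝ) ≤ ‖gradient φ 0‖ / φ 0 := div_nonneg (norm_nonneg _) h1.le
    linarith [norm_nonneg (gradient φ 0), sq_nonneg (‖gradient φ 0‖ / φ 0),
      sq_nonneg ‖gradient φ 0‖]
  have hgradle : ∀ x, ‖gradient φ x‖ / φ x ≤ Cφ := by
    intro x
    have h := hφgrad x
    have h1 : (0:ℝ) < φ x := by linarith [(hφb x).1]
    linarith [norm_nonneg (gradient φ x),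
      sq_nonneg (‖gradient φ x‖ / φ x), sq_nonneg ‖gradient φ x‖]
  set A : Set (Rn N) := {x : Rn N | φ x < u x} with hAdef
  have hAmeas : MeasurableSet A := measurableSet_lt hφcont.measurable hu
  have hPsi_nonneg : ∀ x : Rn N, 0 ≤ Psi N ε x := fun x => le_max_right _ _
  have hxA : ∀ x ∈ A, ‖x‖ < R := by
    intro x hx
    by_contra hc
    push_neg at hc
    have h1 := hφout x hc
    have h2 := (hu01 x).2
    have h3 : φ x < u x := hx
    linarith
  have hAsub : A ⊆ ball (0 : Rn N) R := fun x hx => by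
    rw [mem_ball, dist_zero_right]; exact hxA x hx
  have hAvol : volume A < ⊤ := lt_of_le_of_lt (measure_mono hAsub) measure_ball_lt_top
  have hPsi0 : ∀ x : Rn N, ‖x‖ < R → Psi N ε x = 0 := by
    intro x hx
    have h1 : ‖x‖ ^ ε ≤ R ^ ε := Real.rpow_le_rpow (norm_nonneg x) hx.le hε.le
    have h2 : R ^ ε = 2 := by
      rw [hRdef, ← Real.rpow_mul (by norm_num : (0:ℝ) ≤ 2), one_div,
        inv_mul_cancel₀ hε.ne']
      exact Real.rpow_one 2
    have h3 : ‖x‖ ^ ε - 2 ≤ 0 := by rw [h2] at h1; linarith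
    show max (‖x‖ ^ ε - 2) 0 = 0
    exact max_eq_right h3
  set S : Set (Rn N × Rn N) := {q : Rn N × Rn N | η ≤ dist q.1 q.2} with hSdef
  have hSmeas : MeasurableSet S :=
    measurableSet_le measurable_const (measurable_fst.dist measurable_snd)
  set f : Rn N × Rn N → ℝ := fun q =>
    max (u q.1 - φ q.1) 0 * (-(max (φ q.2 - u q.2) 0) - -(max (φ q.1 - u q.1) 0))
      * DG m (u q.1) (u q.2)
      * (inner ℝ ((φ q.1)⁻¹ • gradient φ q.1) (q.2 - q.1) : ℝ)
      * ‖q.2 - q.1‖ ^ (-((N : ℝ) + α)) with hfdef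
  have key : ∀ q : Rn N × Rn N,
      ENNReal.ofReal ‖S.indicator f q‖ ≤
        ENNReal.ofReal (c * Cφ) *
          (A.indicator (fun _ => (1:ℝ≥0∞)) q.1 * ENNReal.ofReal (Hr (q.2 - q.1))) := by
    intro q
    by_cases hqS : q ∈ S
    swap
    · rw [indicator_of_notMem hqS]
      simp only [norm_zero, ENNReal.ofReal_zero]
      exact zero_le
    rw [indicator_of_mem hqS]
    obtain ⟨x, y⟩ := q
    have hqS' : η ≤ dist x y := hqS
    by_cases hux : φ x < u x
    swap
    · have hv : max (u x - φ x) 0 = 0 := max_eq_right (by push_neg at hux; linarith)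
      rw [hfdef]
      dsimp only
      rw [hv, zero_mul, zero_mul, zero_mul, zero_mul, norm_zero, ENNReal.ofReal_zero]
      exact zero_le
    -- main case
    have hxR : ‖x‖ < R := hxA x hux
    have hΨx : Psi N ε x = 0 := hPsi0 x hxR
    have hφx : 1/4 < φ x := (hφb x).1
    have hux1 : u x ≤ 1 := by have h := (hu01 x).2; rw [hΨx] at h; linarith
    have hdist : η ≤ ‖y - x‖ := by rwa [dist_comm, dist_eq_norm] at hqS'
    have hyx0 : (0:ℝ) < ‖y - x‖ := lt_of_lt_of_le hη0 hdist
    have hv1 : max (u x - φ x) 0 ≤ 1 := max_le (by linarith) zero_le_one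
    have hv0 : (0:ℝ) ≤ max (u x - φ x) 0 := le_max_right _ _
    have hwx : max (φ x - u x) 0 = 0 := max_eq_right (by linarith)
    set My : ℝ := 1 + Psi N ε y with hMydef
    have hMy1 : (1:ℝ) ≤ My := by have := hPsi_nonneg y; rw [hMydef]; linarith
    have hw : |(-(max (φ y - u y) 0)) - (-(max (φ x - u x) 0))| ≤ My := by
      rw [hwx, neg_zero, sub_zero, abs_neg, abs_of_nonneg (le_max_right _ _)]
      exact max_le (by have := (hφb y).2; have := (hu01 y).1; rw [hMydef]; linarith)
        (by linarith)
    have hDG : |DG m (u x) (u y)| ≤ (m - 1) * My ^ (m - 2) :=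
      DG_abs_le hm (hu01 x).1 (hu01 y).1 (by linarith)
        (by have := (hu01 y).2; rw [hMydef]; linarith)
    have hinner : |(inner ℝ ((φ x)⁻¹ • gradient φ x) (y - x) : ℝ)| ≤ Cφ * ‖y - x‖ := by
      have hφinv : (0:ℝ) < (φ x)⁻¹ := inv_pos.2 (by linarith)
      calc |(inner ℝ ((φ x)⁻¹ • gradient φ x) (y - x) : ℝ)|
          ≤ ‖(φ x)⁻¹ • gradient φ x‖ * ‖y - x‖ := abs_real_inner_le_norm _ _
      _ = ((φ x)⁻¹ * ‖gradient φ x‖) * ‖y - x‖ := by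
          rw [norm_smul, Real.norm_eq_abs, abs_of_pos hφinv]
      _ ≤ Cφ * ‖y - x‖ := by
          apply mul_le_mul_of_nonneg_right _ (norm_nonneg _)
          have h := hgradle x
          rw [div_eq_inv_mul] at h
          exact h
    have hP0 : (0:ℝ) ≤ ‖y - x‖ ^ (-((N:ℝ) + α)) := Real.rpow_nonneg (norm_nonneg _) _
    have hMyMy : My * My ^ (m - 2) = My ^ (m - 1) := by
      have h0 : (0:ℝ) < My := by linarith
      have h := Real.rpow_add h0 1 (m - 2)
      rw [Real.rpow_one] at h
      rw [← h, show (1:ℝ) + (m - 2) = m - 1 by ring]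
    have hPP : ‖y - x‖ * ‖y - x‖ ^ (-((N:ℝ) + α)) = ‖y - x‖ ^ (1 - ((N:ℝ) + α)) := by
      have h := Real.rpow_add hyx0 1 (-((N:ℝ) + α))
      rw [Real.rpow_one] at h
      rw [← h, show (1:ℝ) + -((N:ℝ) + α) = 1 - ((N:ℝ) + α) by ring]
    have hMy_le : My ^ (m - 1) ≤ 2 ^ (m - 1) * (1 + ‖y‖ ^ β) := by
      have hyε : (0:ℝ) ≤ ‖y‖ ^ ε := Real.rpow_nonneg (norm_nonneg y) _
      have h1 : My ≤ 1 + ‖y‖ ^ ε := by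
        have hΨ : Psi N ε y ≤ ‖y‖ ^ ε := max_le (by linarith) hyε
        rw [hMydef]; linarith
      have h2 : My ^ (m - 1) ≤ (1 + ‖y‖ ^ ε) ^ (m - 1) :=
        Real.rpow_le_rpow (by linarith) h1 (by linarith)
      have h3 : (1 + ‖y‖ ^ ε) ≤ 2 * max 1 (‖y‖ ^ ε) := by
        rcases le_total (‖y‖ ^ ε) 1 with h | h
        · rw [max_eq_left h]; linarith
        · rw [max_eq_right h]; linarith
      have h4 : (1 + ‖y‖ ^ ε) ^ (m - 1) ≤ (2 * max 1 (‖y‖ ^ ε)) ^ (m - 1) :=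
        Real.rpow_le_rpow (by linarith) h3 (by linarith)
      have h5 : (2 * max 1 (‖y‖ ^ ε)) ^ (m - 1)
          = 2 ^ (m - 1) * (max 1 (‖y‖ ^ ε)) ^ (m - 1) :=
        Real.mul_rpow (by norm_num) (le_max_of_le_left zero_le_one)
      have hyβ0 : (0:ℝ) ≤ ‖y‖ ^ β := Real.rpow_nonneg (norm_nonneg y) _
      have h6 : (max 1 (‖y‖ ^ ε)) ^ (m - 1) ≤ 1 + ‖y‖ ^ β := by
        rcases le_total (‖y‖ ^ ε) 1 with h | h
        · rw [max_eq_left h, Real.one_rpow]; linarith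
        · rw [max_eq_right h]
          have heq : (‖y‖ ^ ε) ^ (m - 1) = ‖y‖ ^ β := by
            rw [hβdef]; exact (Real.rpow_mul (norm_nonneg y) _ _).symm
          rw [heq]; linarith
      have h2pow : (0:ℝ) ≤ 2 ^ (m - 1) := Real.rpow_nonneg (by norm_num) _
      calc My ^ (m - 1) ≤ (1 + ‖y‖ ^ ε) ^ (m - 1) := h2
      _ ≤ 2 ^ (m - 1) * (max 1 (‖y‖ ^ ε)) ^ (m - 1) := by rw [← h5]; exact h4
      _ ≤ 2 ^ (m - 1) * (1 + ‖y‖ ^ β) := mul_le_mul_of_nonneg_left h6 h2pow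
    have hyβ : ‖y‖ ^ β ≤ R ^ β + ‖y - x‖ ^ β := by
      have h1 : ‖y‖ ≤ ‖x‖ + ‖y - x‖ := by
        have h := norm_add_le x (y - x)
        rw [add_sub_cancel] at h
        exact h
      calc ‖y‖ ^ β ≤ (‖x‖ + ‖y - x‖) ^ β :=
            Real.rpow_le_rpow (norm_nonneg _) h1 hβ0.le
      _ ≤ ‖x‖ ^ β + ‖y - x‖ ^ β :=
            real_rpow_add_le (norm_nonneg _) (norm_nonneg _) hβ0.le hβ1
      _ ≤ R ^ β + ‖y - x‖ ^ β := by
            have : ‖x‖ ^ β ≤ R ^ β := Real.rpow_le_rpow (norm_nonneg _) hxR.le hβ0.le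
            linarith
    -- assemble the real inequality
    have hm2 : (0:ℝ) ≤ m - 1 := by linarith
    have hMypow : (0:ℝ) ≤ My ^ (m - 2) := Real.rpow_nonneg (by linarith) _
    have h2pow : (0:ℝ) ≤ 2 ^ (m - 1) := Real.rpow_nonneg (by norm_num) _
    have hyxβ0 : (0:ℝ) ≤ ‖y - x‖ ^ β := Real.rpow_nonneg (norm_nonneg _) _
    have hMyfin : My ^ (m - 1) ≤ 2 ^ (m - 1) * (1 + R ^ β + ‖y - x‖ ^ β) := by
      calc My ^ (m - 1) ≤ 2 ^ (m - 1) * (1 + ‖y‖ ^ β) := hMy_le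
      _ ≤ 2 ^ (m - 1) * (1 + R ^ β + ‖y - x‖ ^ β) :=
          mul_le_mul_of_nonneg_left (by linarith) h2pow
    have hreal : ‖f (x, y)‖ ≤ c * Cφ * Hr (y - x) := by
      rw [hfdef]
      dsimp only
      rw [Real.norm_eq_abs, abs_mul, abs_mul, abs_mul, abs_mul,
        abs_of_nonneg hv0, abs_of_nonneg hP0]
      have h_ab : max (u x - φ x) 0 * |(-(max (φ y - u y) 0)) - (-(max (φ x - u x) 0))|
          ≤ 1 * My := mul_le_mul hv1 hw (abs_nonneg _) zero_le_one
      have h_abd : max (u x - φ x) 0 * |(-(max (φ y - u y) 0)) - (-(max (φ x - u x) 0))|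
            * |DG m (u x) (u y)|
          ≤ (1 * My) * ((m - 1) * My ^ (m - 2)) :=
        mul_le_mul h_ab hDG (abs_nonneg _) (by linarith)
      have h_abdi : max (u x - φ x) 0 * |(-(max (φ y - u y) 0)) - (-(max (φ x - u x) 0))|
            * |DG m (u x) (u y)| * |(inner ℝ ((φ x)⁻¹ • gradient φ x) (y - x) : ℝ)|
          ≤ ((1 * My) * ((m - 1) * My ^ (m - 2))) * (Cφ * ‖y - x‖) :=
        mul_le_mul h_abd hinner (abs_nonneg _)
          (mul_nonneg (by linarith) (mul_nonneg hm2 hMypow))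
      calc max (u x - φ x) 0 * |(-(max (φ y - u y) 0)) - (-(max (φ x - u x) 0))|
            * |DG m (u x) (u y)| * |(inner ℝ ((φ x)⁻¹ • gradient φ x) (y - x) : ℝ)|
            * ‖y - x‖ ^ (-((N:ℝ) + α))
          ≤ ((1 * My) * ((m - 1) * My ^ (m - 2))) * (Cφ * ‖y - x‖)
            * ‖y - x‖ ^ (-((N:ℝ) + α)) := mul_le_mul_of_nonneg_right h_abdi hP0
      _ = (m - 1) * (My * My ^ (m - 2)) * Cφ
            * (‖y - x‖ * ‖y - x‖ ^ (-((N:ℝ) + α))) := by ring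
      _ = (m - 1) * My ^ (m - 1) * Cφ * ‖y - x‖ ^ (1 - ((N:ℝ) + α)) := by
            rw [hMyMy, hPP]
      _ ≤ (m - 1) * (2 ^ (m - 1) * (1 + R ^ β + ‖y - x‖ ^ β)) * Cφ
            * ‖y - x‖ ^ (1 - ((N:ℝ) + α)) := by
            apply mul_le_mul_of_nonneg_right _ (Real.rpow_nonneg (norm_nonneg _) _)
            apply mul_le_mul_of_nonneg_right _ hCφ0
            exact mul_le_mul_of_nonneg_left hMyfin hm2
      _ = c * Cφ * Hr (y - x) := by
            rw [hHrdef]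
            dsimp only
            rw [if_pos hdist, hcdef]
            ring
    have hxAmem : x ∈ A := hux
    rw [indicator_of_mem hxAmem]
    calc ENNReal.ofReal ‖f (x, y)‖ ≤ ENNReal.ofReal (c * Cφ * Hr (y - x)) :=
          ENNReal.ofReal_le_ofReal hreal
    _ = ENNReal.ofReal (c * Cφ) * ENNReal.ofReal (Hr (y - x)) :=
          ENNReal.ofReal_mul (mul_nonneg hc0.le hCφ0)
    _ = ENNReal.ofReal (c * Cφ) * ((1:ℝ≥0∞) * ENNReal.ofReal (Hr ((x, y).2 - (x, y).1))) := by
          rw [one_mul]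
  -- measurability of the bounding function
  have hg_meas : Measurable fun q : Rn N × Rn N =>
      (A.indicator (fun _ => (1:ℝ≥0∞)) q.1) * ENNReal.ofReal (Hr (q.2 - q.1)) := by
    apply Measurable.mul
    · exact (measurable_const.indicator hAmeas).comp measurable_fst
    · exact ENNReal.measurable_ofReal.comp (hHr_meas.comp (measurable_snd.sub measurable_fst))
  -- Tonelli computation
  have hT : (∫⁻ q : Rn N × Rn N,
      (A.indicator (fun _ => (1:ℝ≥0∞)) q.1) * ENNReal.ofReal (Hr (q.2 - q.1)))
      = J * volume A := by
    rw [MeasureTheory.Measure.volume_eq_prod, lintegral_prod _ hg_meas.aemeasurable]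
    have inner_eq : ∀ x : Rn N,
        (∫⁻ y, (A.indicator (fun _ => (1:ℝ≥0∞)) x) * ENNReal.ofReal (Hr (y - x)) ∂volume)
          = (A.indicator (fun _ => (1:ℝ≥0∞)) x) * J := by
      intro x
      rw [lintegral_const_mul _
        (show Measurable fun y : Rn N => ENNReal.ofReal (Hr (y - x)) from
          (hHr_meas.comp (measurable_id.sub measurable_const)).ennreal_ofReal)]
      congr 1
      have h := (measurePreserving_add_right (volume : Measure (Rn N)) (-x)).lintegral_comp
        (ENNReal.measurable_ofReal.comp hHr_meas)
      rw [hJdef]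
      simpa [Function.comp, sub_eq_add_neg] using h
    simp only [inner_eq]
    have hind : ∀ x : Rn N,
        (A.indicator (fun _ => (1:ℝ≥0∞)) x) * J = A.indicator (fun _ => J) x := by
      intro x; by_cases hx : x ∈ A <;> simp [hx]
    simp only [hind]
    rw [lintegral_indicator hAmeas, setLIntegral_const]
  -- final chain
  have hfin : ENNReal.ofReal (c * Cφ) * (J * volume A) ≠ ⊤ :=
    ENNReal.mul_ne_top ENNReal.ofReal_ne_top (ENNReal.mul_ne_top hJ.ne hAvol.ne)
  have hlin : (∫⁻ q : Rn N × Rn N, ENNReal.ofReal ‖S.indicator f q‖)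
      ≤ ENNReal.ofReal (c * Cφ) * (J * volume A) := by
    calc (∫⁻ q : Rn N × Rn N, ENNReal.ofReal ‖S.indicator f q‖)
        ≤ ∫⁻ q : Rn N × Rn N, ENNReal.ofReal (c * Cφ) *
            ((A.indicator (fun _ => (1:ℝ≥0∞)) q.1) * ENNReal.ofReal (Hr (q.2 - q.1))) :=
          lintegral_mono key
    _ = ENNReal.ofReal (c * Cφ) * (J * volume A) := by
          rw [lintegral_const_mul _ hg_meas, hT]
  have hQGeq : QG N α m κ₁ u φ S (fun x => max (u x - φ x) 0)
      (fun x => -(max (φ x - u x) 0)) = κ₁ * ∫ q : Rn N × Rn N, S.indicator f q := by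
    rw [QG, integral_indicator hSmeas]
  rw [hQGeq]
  have hIle : (∫ q : Rn N × Rn N, S.indicator f q)
      ≤ c * Cφ * (J.toReal * (volume A).toReal) := by
    calc (∫ q : Rn N × Rn N, S.indicator f q) ≤ ‖∫ q : Rn N × Rn N, S.indicator f q‖ :=
          le_abs_self _
    _ ≤ (∫⁻ q : Rn N × Rn N, ENNReal.ofReal ‖S.indicator f q‖).toReal :=
          norm_integral_le_lintegral_norm _
    _ ≤ (ENNReal.ofReal (c * Cφ) * (J * volume A)).toReal := ENNReal.toReal_mono hfin hlin
    _ = c * Cφ * (J.toReal * (volume A).toReal) := by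
          rw [ENNReal.toReal_mul, ENNReal.toReal_mul,
            ENNReal.toReal_ofReal (mul_nonneg hc0.le hCφ0)]
  have hvol0 : (0:ℝ) ≤ (volume A).toReal := ENNReal.toReal_nonneg
  have hJt0 : (0:ℝ) ≤ J.toReal := ENNReal.toReal_nonneg
  calc κ₁ * ∫ q : Rn N × Rn N, S.indicator f q
      ≤ κ₁ * (c * Cφ * (J.toReal * (volume A).toReal)) :=
        mul_le_mul_of_nonneg_left hIle hκ₁.le
  _ ≤ κ₁ * (c * (J.toReal + 1)) * Cφ * (volume A).toReal := by
      nlinarith [mul_nonneg (mul_nonneg hc0.le hCφ0) hvol0]
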